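/- arXiv:1611.01818 — 2 statements merged into one kernel-verified Lean document; each statement's English description precedes it below -/
import Mathlib

section
/- Let G be a connected simple graph on at least two vertices and let 0 ≤ β < α ≤ 1 be real numbers. Then λ_min(A_β(G)) < λ_min(A_α(G)); that is, the smallest eigenvalue of A_α(G) is strictly increasing in α for connected graphs. -/
open Matrix SimpleGraph

/-- Adjacency matrix of `G` over `ℝ`. -/
noncomputable def adjM {V : Type*} [Fintype V] (G : SimpleGraph V) : Matrix V V ℝ := by
  classical exact G.adjMatrix ℝ

/-- Diagonal matrix of vertex degrees of `G`, over `ℝ`. -/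
noncomputable def degM {V : Type*} [Fintype V] (G : SimpleGraph V) : Matrix V V ℝ := by
  classical exact Matrix.diagonal fun v => (G.degree v : ℝ)

/-- `A_α(G) = α·D(G) + (1-α)·A(G)`. -/
noncomputable def Amix {V : Type*} [Fintype V] (G : SimpleGraph V) (α : ℝ) : Matrix V V ℝ :=
  α • degM G + (1 - α) • adjM G

/-- Smallest eigenvalue of a real symmetric matrix (junk value `0` otherwise). -/
noncomputable def lambdaMin {n : Type*} [Fintype n] (M : Matrix n n ℝ) : ℝ := by
  classical exact if h : M.IsHermitian then ⨅ i, h.eigenvalues i else 0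

/-- Largest eigenvalue of a real symmetric matrix (junk value `0` otherwise). -/
noncomputable def lambdaMax {n : Type*} [Fintype n] (M : Matrix n n ℝ) : ℝ := by
  classical exact if h : M.IsHermitian then ⨆ i, h.eigenvalues i else 0

/-- `α₀(G)`: the smallest `α ∈ [0,1]` such that `A_α(G)` is positive semidefinite. -/
noncomputable def alpha0 {V : Type*} [Fintype V] (G : SimpleGraph V) : ℝ :=
  sInf {α : ℝ | α ∈ Set.Icc (0:ℝ) 1 ∧ (Amix G α).PosSemidef}

/-! Since `A_β = A_α - (α - β) L` with `L` the Laplacian, testing `A_β` on an eigenvector `x` for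
`λ_min(A_α)` gives `λ_min(A_β) ‖x‖² ≤ λ_min(A_α) ‖x‖² - (α - β) xᵀ L x`. This is strict unless
`xᵀ L x = 0`, i.e. `x` is constant on the connected graph `G`. In that case the eigenvalue
equation forces `G` to be `d`-regular with `λ_min(A_α) = d ≥ 1`, and the trace bound
`n λ_min(A_β) ≤ tr A_β = β n d < n d` concludes. -/

section lambdaMin

variable {n : Type*} [Fintype n] [DecidableEq n] {M : Matrix n n ℝ}

lemma lambdaMin_eq_iInf (hM : M.IsHermitian) : lambdaMin M = ⨅ i, hM.eigenvalues i := by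
  rw [lambdaMin, dif_pos hM]
  congr!

lemma lambdaMin_le_eigenvalues (hM : M.IsHermitian) (i : n) : lambdaMin M ≤ hM.eigenvalues i :=
  lambdaMin_eq_iInf hM ▸ ciInf_le (Finite.bddBelow_range _) i

lemma exists_eigenvalues_eq_lambdaMin [Nonempty n] (hM : M.IsHermitian) :
    ∃ i, hM.eigenvalues i = lambdaMin M := by
  obtain ⟨i, hi⟩ := Finite.exists_min hM.eigenvalues
  exact ⟨i, le_antisymm (lambdaMin_eq_iInf hM ▸ le_ciInf hi) (lambdaMin_le_eigenvalues hM i)⟩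

lemma exists_mulVec_eq_lambdaMin_smul [Nonempty n] (hM : M.IsHermitian) :
    ∃ x ≠ 0, M *ᵥ x = lambdaMin M • x := by
  obtain ⟨i, hi⟩ := exists_eigenvalues_eq_lambdaMin hM
  refine ⟨hM.eigenvectorBasis i, ?_, hi ▸ hM.mulVec_eigenvectorBasis i⟩
  exact (WithLp.ofLp_eq_zero 2).ne.mpr (hM.eigenvectorBasis.orthonormal.ne_zero i)

open scoped MatrixOrder in
lemma lambdaMin_mul_dotProduct_self_le (hM : M.IsHermitian) (x : n → ℝ) :
    lambdaMin M * (x ⬝ᵥ x) ≤ x ⬝ᵥ (M *ᵥ x) := by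
  have hle : algebraMap ℝ (Matrix n n ℝ) (lambdaMin M) ≤ M := by
    refine algebraMap_le_of_le_spectrum ?_ hM.isSelfAdjoint
    rw [hM.spectrum_real_eq_range_eigenvalues]
    rintro _ ⟨i, rfl⟩
    exact lambdaMin_le_eigenvalues hM i
  have := (Matrix.le_iff.mp hle).dotProduct_mulVec_nonneg x
  rw [Algebra.algebraMap_eq_smul_one, sub_mulVec, dotProduct_sub, smul_mulVec, one_mulVec,
    dotProduct_smul, smul_eq_mul, star_trivial] at this
  linarith

lemma card_mul_lambdaMin_le_trace (hM : M.IsHermitian) :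
    Fintype.card n * lambdaMin M ≤ M.trace := by
  rw [hM.trace_eq_sum_eigenvalues]
  simpa using Finset.card_nsmul_le_sum Finset.univ hM.eigenvalues _
    fun i _ => lambdaMin_le_eigenvalues hM i

end lambdaMin

lemma SimpleGraph.Connected.eq_const_of_dotProduct_lapMatrix_mulVec_eq_zero {V : Type*}
    [Fintype V] [DecidableEq V] {G : SimpleGraph V} [DecidableRel G.Adj] (hconn : G.Connected)
    {x : V → ℝ} (hx : x ⬝ᵥ (G.lapMatrix ℝ *ᵥ x) = 0) (v : V) : x = Function.const V (x v) := by
  have h := (G.lapMatrix_toLinearMap₂'_apply'_eq_zero_iff_forall_reachable x).mp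
    (by rw [Matrix.toLinearMap₂'_apply']; exact hx)
  exact funext fun u => h u v (hconn.preconnected u v)

section Amix

variable {V : Type*} [Fintype V] (G : SimpleGraph V)

lemma adjM_eq_adjMatrix [DecidableRel G.Adj] : adjM G = G.adjMatrix ℝ := by
  unfold adjM
  congr!

lemma degM_eq_degMatrix [DecidableEq V] [DecidableRel G.Adj] : degM G = G.degMatrix ℝ := by
  unfold degM degMatrix
  congr!

lemma Amix_eq [DecidableEq V] [DecidableRel G.Adj] (γ : ℝ) :
    Amix G γ = γ • G.degMatrix ℝ + (1 - γ) • G.adjMatrix ℝ := by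
  rw [Amix, adjM_eq_adjMatrix, degM_eq_degMatrix]

lemma isHermitian_Amix (γ : ℝ) : (Amix G γ).IsHermitian := by
  classical
  rw [Amix_eq, IsHermitian, conjTranspose_eq_transpose_of_trivial]
  exact ((G.isSymm_degMatrix (R := ℝ)).smul γ).add ((G.isSymm_adjMatrix).smul (1 - γ))

lemma Amix_eq_sub_smul_lapMatrix [DecidableEq V] [DecidableRel G.Adj] (α β : ℝ) :
    Amix G β = Amix G α - (α - β) • G.lapMatrix ℝ := by
  rw [Amix_eq, Amix_eq, lapMatrix]
  module

lemma Amix_mulVec_const [DecidableRel G.Adj] (γ c : ℝ) :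
    Amix G γ *ᵥ Function.const V c = fun v => G.degree v * c := by
  classical
  ext v
  simp [Amix_eq, add_mulVec, smul_mulVec, degMatrix_mulVec_apply]
  ring

lemma trace_Amix [DecidableRel G.Adj] (γ : ℝ) :
    (Amix G γ).trace = γ * ∑ v, (G.degree v : ℝ) := by
  classical
  simp [Amix_eq, degMatrix, trace_diagonal]

lemma lambdaMin_Amix_lt_of_isRegularOfDegree [Nonempty V] [DecidableRel G.Adj] {d : ℕ}
    (hreg : G.IsRegularOfDegree d) (hd : 0 < d) {β : ℝ} (hβ : β < 1) :
    lambdaMin (Amix G β) < d := by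
  classical
  have hn : (0 : ℝ) < Fintype.card V := by exact_mod_cast Fintype.card_pos
  have hbound := card_mul_lambdaMin_le_trace (isHermitian_Amix G β)
  rw [trace_Amix, Finset.sum_congr rfl fun v _ => congrArg Nat.cast (hreg.degree_eq v)] at hbound
  simp only [Finset.sum_const, Finset.card_univ, nsmul_eq_mul] at hbound
  have hd' : (0 : ℝ) < d := by exact_mod_cast hd
  refine lt_of_mul_lt_mul_left ?_ hn.le
  nlinarith [mul_pos hn hd']

lemma lambdaMin_Amix_lt_of_mulVec_const (hconn : G.Connected) [Nontrivial V] {α β c : ℝ}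
    (hc : c ≠ 0) (hβ : β < 1)
    (h : Amix G α *ᵥ Function.const V c = lambdaMin (Amix G α) • Function.const V c) :
    lambdaMin (Amix G β) < lambdaMin (Amix G α) := by
  classical
  have hdeg (v : V) : (G.degree v : ℝ) = lambdaMin (Amix G α) := by
    have hv := congrFun h v
    rw [Amix_mulVec_const] at hv
    exact mul_right_cancel₀ hc hv
  obtain ⟨v₀⟩ := hconn.nonempty
  have hreg : G.IsRegularOfDegree (G.degree v₀) := fun v => by
    exact_mod_cast (hdeg v).trans (hdeg v₀).symm
  rw [← hdeg v₀]
  exact lambdaMin_Amix_lt_of_isRegularOfDegree G hreg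
    (hconn.preconnected.degree_pos_of_nontrivial v₀) hβ

end Amix

theorem stmt_2_general {V : Type*} [Fintype V] (G : SimpleGraph V)
    (hconn : G.Connected) (hcard : 2 ≤ Fintype.card V)
    (α β : ℝ) (hβα : β < α) (hα : α ≤ 1) :
    lambdaMin (Amix G β) < lambdaMin (Amix G α) := by
  classical
  have : Nontrivial V := Fintype.one_lt_card_iff_nontrivial.mp hcard
  obtain ⟨x, hx0, hx⟩ := exists_mulVec_eq_lambdaMin_smul (isHermitian_Amix G α)
  have hxx : 0 < x ⬝ᵥ x := by simpa using dotProduct_self_star_pos_iff.mpr hx0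
  have hray : lambdaMin (Amix G β) * (x ⬝ᵥ x) ≤
      lambdaMin (Amix G α) * (x ⬝ᵥ x) - (α - β) * (x ⬝ᵥ (G.lapMatrix ℝ *ᵥ x)) :=
    calc lambdaMin (Amix G β) * (x ⬝ᵥ x) ≤ x ⬝ᵥ (Amix G β *ᵥ x) :=
          lambdaMin_mul_dotProduct_self_le (isHermitian_Amix G β) x
      _ = _ := by
        rw [Amix_eq_sub_smul_lapMatrix G α β, sub_mulVec, dotProduct_sub, hx, smul_mulVec,
          dotProduct_smul, dotProduct_smul, smul_eq_mul, smul_eq_mul]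
  have hLx : 0 ≤ x ⬝ᵥ (G.lapMatrix ℝ *ᵥ x) := by
    simpa using (posSemidef_lapMatrix ℝ G).dotProduct_mulVec_nonneg x
  rcases hLx.lt_or_eq with hq | hq
  · refine lt_of_mul_lt_mul_right ?_ hxx.le
    nlinarith [mul_pos (sub_pos.mpr hβα) hq]
  · obtain ⟨v⟩ := hconn.nonempty
    have hxc := hconn.eq_const_of_dotProduct_lapMatrix_mulVec_eq_zero hq.symm v
    rw [hxc] at hx hx0
    exact lambdaMin_Amix_lt_of_mulVec_const G hconn (fun h => hx0 (by simp [h]))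
      (hβα.trans_le hα) hx

/-- If G is connected with at least two vertices and 0 ≤ β < α ≤ 1,
then λ_min(A_β(G)) < λ_min(A_α(G)). -/
theorem stmt_2 {V : Type*} [Fintype V] (G : SimpleGraph V)
    (hconn : G.Connected) (hcard : 2 ≤ Fintype.card V)
    (α β : ℝ) (hβ : 0 ≤ β) (hβα : β < α) (hα : α ≤ 1) :
    lambdaMin (Amix G β) < lambdaMin (Amix G α) :=
  stmt_2_general G hconn hcard α β hβα hα
end

section
/- Let G be a connected simple graph on a finite vertex set that is not bipartite, and let Q(G) = D(G) + A(G) be its signless Laplacian. Then α₀(G) ≤ −λ_min(A(G)) / (λ_min(Q(G)) − 2·λ_min(A(G))). -/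
/-!
Write `q = λ_min(Q(G))` and `a = λ_min(A(G))`. Since `A_α = α Q + (1 - 2α) A`, the Loewner bounds
`Q ≥ q I` and `A ≥ a I` give `A_α ≥ (α q + (1 - 2α) a) I` whenever `0 ≤ α ≤ 1/2`, and the scalar
vanishes at `α = -a / (q - 2a)`. This `α` lies in `[0, 1/2]` because `q ≥ 0` (the quadratic form of
`Q` is a sum of squares `(x u + x v)²` over the edges) and `a < 0` (the vector `e_u - e_v` of an edge
`uv` has Rayleigh quotient `-1`); a graph that is not bipartite has an edge.
-/

open Matrix SimpleGraph

open scoped MatrixOrder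

section lambdaMin

variable {n : Type*} [Fintype n]

lemma Matrix.IsHermitian.lambdaMin_smul_one_le [DecidableEq n] {M : Matrix n n ℝ}
    (hM : M.IsHermitian) : lambdaMin M • (1 : Matrix n n ℝ) ≤ M := by
  rw [← Algebra.algebraMap_eq_smul_one, algebraMap_le_iff_le_spectrum hM.isSelfAdjoint]
  classical
  rw [hM.spectrum_real_eq_range_eigenvalues]
  rintro _ ⟨i, rfl⟩
  rw [lambdaMin, dif_pos hM]
  exact ciInf_le (Finite.bddBelow_range _) i

lemma Matrix.PosSemidef.lambdaMin_nonneg {M : Matrix n n ℝ} (hM : M.PosSemidef) :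
    0 ≤ lambdaMin M := by
  classical
  rw [lambdaMin, dif_pos hM.1]
  exact Real.iInf_nonneg hM.eigenvalues_nonneg

lemma Matrix.IsHermitian.lambdaMin_neg_of_dotProduct_mulVec_neg {M : Matrix n n ℝ}
    (hM : M.IsHermitian) {x : n → ℝ} (hx : x ⬝ᵥ M *ᵥ x < 0) : lambdaMin M < 0 := by
  classical
  have hle := (Matrix.le_iff.mp hM.lambdaMin_smul_one_le).dotProduct_mulVec_nonneg x
  simp only [star_trivial, sub_mulVec, smul_mulVec, one_mulVec, dotProduct_sub,
    dotProduct_smul, smul_eq_mul] at hle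
  by_contra! hnonneg
  have hxx : 0 ≤ x ⬝ᵥ x := by simpa using dotProduct_self_star_nonneg x
  nlinarith [mul_nonneg hnonneg hxx]

lemma posSemidef_smul_add_smul_of_lambdaMin [DecidableEq n] {M N : Matrix n n ℝ}
    (hM : M.IsHermitian) (hN : N.IsHermitian) {s t : ℝ} (hs : 0 ≤ s) (ht : 0 ≤ t)
    (h : 0 ≤ s * lambdaMin M + t * lambdaMin N) : (s • M + t • N).PosSemidef := by
  have hsplit : s • M + t • N = s • (M - lambdaMin M • 1) + t • (N - lambdaMin N • 1) +
      (s * lambdaMin M + t * lambdaMin N) • (1 : Matrix n n ℝ) := by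
    module
  rw [hsplit]
  exact ((hM.lambdaMin_smul_one_le.smul hs).add (hN.lambdaMin_smul_one_le.smul ht)).add
    (PosSemidef.one.smul h)

end lambdaMin

lemma Matrix.dotProduct_mulVec_single_sub_single {n R : Type*} [Fintype n] [DecidableEq n]
    [CommRing R] (M : Matrix n n R) (u v : n) :
    (Pi.single u 1 - Pi.single v 1) ⬝ᵥ M *ᵥ (Pi.single u 1 - Pi.single v 1) =
      M u u - M u v - M v u + M v v := by
  simp only [mulVec_sub, mulVec_single_one, sub_dotProduct, single_one_dotProduct, Pi.sub_apply,
    col_apply]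
  ring

section Graph

variable {V : Type*} [Fintype V] (G : SimpleGraph V)

theorem SimpleGraph.two_mul_dotProduct_mulVec_degMatrix_add_adjMatrix {R : Type*} [CommRing R]
    [DecidableEq V] [DecidableRel G.Adj] (x : V → R) :
    2 * (x ⬝ᵥ (G.degMatrix R + G.adjMatrix R) *ᵥ x) =
      ∑ i, ∑ j, if G.Adj i j then (x i + x j) ^ 2 else 0 := by
  have hswap : (∑ i, ∑ j, if G.Adj i j then x i * x i else 0) =
      ∑ i, ∑ j, if G.Adj i j then x j * x j else 0 := by
    rw [Finset.sum_comm]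
    simp_rw [G.adj_comm]
  simp_rw [add_mulVec, dotProduct_add, dotProduct_mulVec_degMatrix, dotProduct_mulVec_adjMatrix,
    degree_eq_sum_if_adj, Finset.sum_mul, ite_mul, one_mul, zero_mul]
  rw [two_mul]
  nth_rewrite 2 [hswap]
  simp_rw [← Finset.sum_add_distrib, ite_add_ite, add_zero]
  congr! 3
  ring

theorem SimpleGraph.posSemidef_degMatrix_add_adjMatrix (R : Type*) [CommRing R] [LinearOrder R]
    [IsStrictOrderedRing R] [StarRing R] [TrivialStar R] [DecidableEq V] [DecidableRel G.Adj] :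
    (G.degMatrix R + G.adjMatrix R).PosSemidef := by
  refine .of_dotProduct_mulVec_nonneg ?_ fun x ↦ ?_
  · exact (G.isHermitian_degMatrix R).add (G.isHermitian_adjMatrix R)
  · have h := G.two_mul_dotProduct_mulVec_degMatrix_add_adjMatrix x
    rw [star_trivial]
    refine nonneg_of_mul_nonneg_right (h ▸ ?_) two_pos
    positivity

lemma isHermitian_adjM : (adjM G).IsHermitian := by
  classical exact G.isHermitian_adjMatrix ℝ

lemma posSemidef_degM_add_adjM : (degM G + adjM G).PosSemidef := by
  classical exact G.posSemidef_degMatrix_add_adjMatrix ℝ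

lemma lambdaMin_adjM_neg {G : SimpleGraph V} (hG : G ≠ ⊥) : lambdaMin (adjM G) < 0 := by
  classical
  obtain ⟨u, v, huv⟩ := ne_bot_iff_exists_adj.mp hG
  apply (isHermitian_adjM G).lambdaMin_neg_of_dotProduct_mulVec_neg
    (x := Pi.single u 1 - Pi.single v 1)
  rw [dotProduct_mulVec_single_sub_single]
  simp [adjM, adjMatrix_apply, huv, huv.symm]

lemma Amix_eq_smul_add_smul (α : ℝ) :
    Amix G α = α • (degM G + adjM G) + (1 - 2 * α) • adjM G := by
  unfold Amix
  module

lemma alpha0_le_of_posSemidef {α : ℝ} (hα : α ∈ Set.Icc (0 : ℝ) 1)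
    (hpsd : (Amix G α).PosSemidef) : alpha0 G ≤ α :=
  csInf_le ⟨0, fun _ hβ ↦ hβ.1.1⟩ ⟨hα, hpsd⟩

end Graph

theorem stmt_11_general {V : Type*} [Fintype V] (G : SimpleGraph V)
    (hnbip : ¬ G.Colorable 2) :
    alpha0 G ≤
      -lambdaMin (adjM G) / (lambdaMin (degM G + adjM G) - 2 * lambdaMin (adjM G)) := by
  classical
  set a := lambdaMin (adjM G)
  set q := lambdaMin (degM G + adjM G)
  have ha : a < 0 := lambdaMin_adjM_neg fun h ↦ hnbip ((colorable_one_iff.mpr h).mono one_le_two)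
  have hq : 0 ≤ q := (posSemidef_degM_add_adjM G).lambdaMin_nonneg
  have hden : 0 < q - 2 * a := by linarith
  set α := -a / (q - 2 * a)
  have hα : α * (q - 2 * a) = -a := div_mul_cancel₀ _ hden.ne'
  have hα0 : 0 ≤ α := div_nonneg (by linarith) hden.le
  have hα12 : 0 ≤ 1 - 2 * α := by
    have h : (1 - 2 * α) * (q - 2 * a) = q := by linear_combination -2 * hα
    exact nonneg_of_mul_nonneg_left (by rwa [h]) hden
  have hbalance : α * q + (1 - 2 * α) * a = 0 := by linear_combination hα
  refine alpha0_le_of_posSemidef G ⟨hα0, by linarith⟩ ?_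
  rw [Amix_eq_smul_add_smul]
  exact posSemidef_smul_add_smul_of_lambdaMin (posSemidef_degM_add_adjM G).1 (isHermitian_adjM G)
    hα0 hα12 hbalance.ge

/-- For a connected nonbipartite graph G,
α₀(G) ≤ −λ_min(A(G)) / (λ_min(Q(G)) − 2·λ_min(A(G))). -/
theorem stmt_11 {V : Type*} [Fintype V] (G : SimpleGraph V)
    (hconn : G.Connected) (hnbip : ¬ G.Colorable 2) :
    alpha0 G ≤
      -lambdaMin (adjM G) / (lambdaMin (degM G + adjM G) - 2 * lambdaMin (adjM G)) :=
  stmt_11_general G hnbip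
end
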